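/- arXiv:2209.12198 — 8 statements merged into one kernel-verified Lean document; each statement's English description precedes it below -/
import Mathlib

section
/- Let a > 0 and s ∈ (0,1). Then a^s = (sin(πs)/π) · ∫₀^∞ λ^{s-1} · a/(a+λ) dλ, where the integral is a Lebesgue integral over (0,∞). -/
/-!
Scaling `λ = a t` turns the integral into `a ^ s ∫₀^∞ t^(s-1)/(1+t) dt`. The substitution
`t = x/(1-x)` carries `∫₀^∞ t^(u-1)/(1+t)^(u+v) dt` to the Beta integral
`B(u, v) = Γ(u)Γ(v)/Γ(u+v)`, and for `u = s`, `v = 1 - s` Euler's reflection formula gives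
`Γ(s)Γ(1-s) = π / sin(πs)`.
-/

open MeasureTheory Real Set

theorem Complex.betaIntegral_ofReal (u v : ℝ) :
    Complex.betaIntegral u v =
      ((∫ x in Ioo (0 : ℝ) 1, x ^ (u - 1) * (1 - x) ^ (v - 1) : ℝ) : ℂ) := by
  rw [Complex.betaIntegral, intervalIntegral.integral_of_le zero_le_one,
    integral_Ioc_eq_integral_Ioo, ← integral_complex_ofReal]
  refine setIntegral_congr_fun measurableSet_Ioo fun x ⟨hx0, hx1⟩ ↦ ?_
  push_cast [Complex.ofReal_cpow hx0.le, Complex.ofReal_cpow (sub_nonneg.2 hx1.le)]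
  rfl

theorem integral_rpow_mul_one_sub_rpow {u v : ℝ} (hu : 0 < u) (hv : 0 < v) :
    ∫ x in Ioo (0 : ℝ) 1, x ^ (u - 1) * (1 - x) ^ (v - 1) = Gamma u * Gamma v / Gamma (u + v) := by
  have h := Complex.betaIntegral_eq_Gamma_mul_div u v (by simpa) (by simpa)
  rw [Complex.betaIntegral_ofReal, ← Complex.ofReal_add, Complex.Gamma_ofReal,
    Complex.Gamma_ofReal, Complex.Gamma_ofReal] at h
  exact_mod_cast h

theorem integral_Ioi_eq_integral_Ioo_div_one_sub {E : Type*} [NormedAddCommGroup E]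
    [NormedSpace ℝ E] (f : ℝ → E) :
    ∫ t in Ioi (0 : ℝ), f t = ∫ x in Ioo (0 : ℝ) 1, ((1 - x) ^ 2)⁻¹ • f (x / (1 - x)) := by
  have himage : (fun x : ℝ ↦ x / (1 - x)) '' Ioo 0 1 = Ioi 0 := by
    ext t
    simp only [mem_image, mem_Ioo, mem_Ioi]
    constructor
    · rintro ⟨x, ⟨hx0, hx1⟩, rfl⟩
      exact div_pos hx0 (sub_pos.2 hx1)
    · intro ht
      refine ⟨t / (1 + t), ⟨by positivity, (div_lt_one (by positivity)).2 (by linarith)⟩, ?_⟩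
      field_simp
      ring
  have hderiv : ∀ x ∈ Ioo (0 : ℝ) 1,
      HasDerivWithinAt (fun x : ℝ ↦ x / (1 - x)) (((1 - x) ^ 2)⁻¹) (Ioo 0 1) x := by
    intro x hx
    have hx1 : 1 - x ≠ 0 := (sub_pos.2 hx.2).ne'
    refine ((hasDerivAt_id x).div ((hasDerivAt_id x).const_sub 1) hx1).hasDerivWithinAt
      |>.congr_deriv ?_
    simp only [id]
    field_simp
    ring
  have hinj : InjOn (fun x : ℝ ↦ x / (1 - x)) (Ioo 0 1) := by
    intro x hx y hy hxy
    have hx1 : 1 - x ≠ 0 := (sub_pos.2 hx.2).ne'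
    have hy1 : 1 - y ≠ 0 := (sub_pos.2 hy.2).ne'
    field_simp at hxy
    linarith
  rw [← himage, integral_image_eq_integral_abs_deriv_smul measurableSet_Ioo hderiv hinj]
  refine setIntegral_congr_fun measurableSet_Ioo fun x _ ↦ ?_
  rw [abs_of_nonneg (by positivity)]

theorem integral_rpow_div_one_add_rpow {u v : ℝ} (hu : 0 < u) (hv : 0 < v) :
    ∫ t in Ioi (0 : ℝ), t ^ (u - 1) / (1 + t) ^ (u + v) = Gamma u * Gamma v / Gamma (u + v) := by
  rw [integral_Ioi_eq_integral_Ioo_div_one_sub, ← integral_rpow_mul_one_sub_rpow hu hv]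
  refine setIntegral_congr_fun measurableSet_Ioo fun x ⟨hx0, hx1⟩ ↦ ?_
  have h1x : 0 < 1 - x := sub_pos.2 hx1
  have hone_add : 1 + x / (1 - x) = (1 - x)⁻¹ := by field_simp; ring
  have hexp : (1 - x) ^ (v - 1) = (1 - x) ^ (u + v) / (1 - x) ^ (u - 1) / (1 - x) ^ 2 := by
    rw [← rpow_sub h1x, ← rpow_two, ← rpow_sub h1x]
    ring_nf
  rw [smul_eq_mul, hone_add, div_rpow hx0.le h1x.le, inv_rpow h1x.le, hexp]
  field_simp

theorem integral_rpow_div_one_add {s : ℝ} (hs : 0 < s) (hs1 : s < 1) :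
    ∫ t in Ioi (0 : ℝ), t ^ (s - 1) / (1 + t) = π / sin (π * s) := by
  simpa only [add_sub_cancel, rpow_one, Gamma_one, div_one, Gamma_mul_Gamma_one_sub] using
    integral_rpow_div_one_add_rpow hs (sub_pos.2 hs1)

theorem integral_rpow_mul_div_add {a : ℝ} (ha : 0 < a) (s : ℝ) :
    ∫ l in Ioi (0 : ℝ), l ^ (s - 1) * (a / (a + l)) =
      a ^ s * ∫ t in Ioi (0 : ℝ), t ^ (s - 1) / (1 + t) := by
  have h := integral_comp_mul_left_Ioi (fun l ↦ l ^ (s - 1) * (a / (a + l))) 0 ha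
  rw [mul_zero, smul_eq_mul, eq_inv_mul_iff_mul_eq₀ ha.ne'] at h
  rw [← h, ← integral_const_mul, ← integral_const_mul]
  refine setIntegral_congr_fun measurableSet_Ioi fun x (hx : 0 < x) ↦ ?_
  rw [mul_rpow ha.le hx.le, rpow_sub_one ha.ne']
  field_simp

/-- Let `a > 0` and `s ∈ (0,1)`. Then
`a^s = (sin(πs)/π) · ∫₀^∞ λ^{s-1} · a/(a+λ) dλ`. -/
theorem stmt0 (a s : ℝ) (ha : 0 < a) (hs : 0 < s) (hs1 : s < 1) :
    a ^ s = (Real.sin (Real.pi * s) / Real.pi) *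
      ∫ l in Set.Ioi (0 : ℝ), l ^ (s - 1) * (a / (a + l)) := by
  have hsin : 0 < sin (π * s) := sin_pos_of_pos_of_lt_pi (by positivity) (by nlinarith [pi_pos])
  rw [integral_rpow_mul_div_add ha, integral_rpow_div_one_add hs hs1]
  field_simp
end

section
/- Let (λ_i)_{i≥1} be a sequence of positive real numbers with Σ_{i=1}^∞ λ_i < ∞, and let 0 < s < 1. Then the identity Σ_{i=1}^∞ λ_i^s = (sin(πs)/π) · ∫₀^∞ λ^{s-1} N(λ) dλ holds as an equality in [0,∞] (in particular, the left-hand side is finite if and only if the integral on the right-hand side is finite). -/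
/-!
By Tonelli, `∫₀^∞ l^(s-1) N(l) dl` is the sum over `i` of `∫₀^∞ l^(s-1) λᵢ/(λᵢ+l) dl`. The
substitution `l = λᵢ x/(1-x)` turns each of these into `λᵢ^s B(s, 1-s)`, and
`B(s, 1-s) = Γ(s) Γ(1-s) = π / sin(πs)` by the reflection formula.
-/

open MeasureTheory Real Set

section BetaIntegral

variable {s : ℝ}

lemma integrableOn_rpow_mul_one_sub_rpow_neg (hs : 0 < s) (hs1 : s < 1) :
    IntegrableOn (fun x : ℝ => x ^ (s - 1) * (1 - x) ^ (-s)) (Ioo 0 1) := by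
  have hc := (Complex.betaIntegral_convergent (u := (s : ℂ)) (v := ((1 - s : ℝ) : ℂ))
    (by simpa using hs) (by simpa using hs1)).norm
  rw [intervalIntegrable_iff_integrableOn_Ioo_of_le zero_le_one] at hc
  refine hc.congr_fun (fun x hx => ?_) measurableSet_Ioo
  dsimp only
  rw [norm_mul, Complex.norm_cpow_eq_rpow_re_of_pos hx.1,
    show (1 : ℂ) - x = ((1 - x : ℝ) : ℂ) by push_cast; ring,
    Complex.norm_cpow_eq_rpow_re_of_pos (sub_pos.2 hx.2)]
  norm_num

lemma integral_rpow_mul_one_sub_rpow_neg (hs : 0 < s) (hs1 : s < 1) :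
    ∫ x in (0 : ℝ)..1, x ^ (s - 1) * (1 - x) ^ (-s) = π / sin (π * s) := by
  have hB := Complex.Gamma_mul_Gamma_eq_betaIntegral (s := (s : ℂ)) (t := ((1 - s : ℝ) : ℂ))
    (by simpa using hs) (by simpa using hs1)
  rw [show (s : ℂ) + ((1 - s : ℝ) : ℂ) = 1 by push_cast; ring, Complex.Gamma_one, one_mul,
    Complex.Gamma_ofReal, Complex.Gamma_ofReal, ← Complex.ofReal_mul,
    Real.Gamma_mul_Gamma_one_sub, Complex.betaIntegral] at hB
  rw [← Complex.ofReal_inj, hB, ← intervalIntegral.integral_ofReal]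
  refine intervalIntegral.integral_congr fun x hx => ?_
  rw [uIcc_of_le zero_le_one] at hx
  simp only [Complex.ofReal_mul]
  rw [Complex.ofReal_cpow hx.1, Complex.ofReal_cpow (sub_nonneg.2 hx.2)]
  push_cast
  ring_nf

lemma lintegral_rpow_mul_one_sub_rpow_neg (hs : 0 < s) (hs1 : s < 1) :
    ∫⁻ x in Ioo 0 1, ENNReal.ofReal (x ^ (s - 1) * (1 - x) ^ (-s))
      = ENNReal.ofReal (π / sin (π * s)) := by
  rw [← integral_rpow_mul_one_sub_rpow_neg hs hs1, intervalIntegral.integral_of_le zero_le_one,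
    integral_Ioc_eq_integral_Ioo, ofReal_integral_eq_lintegral_ofReal
      (integrableOn_rpow_mul_one_sub_rpow_neg hs hs1)]
  filter_upwards [self_mem_ae_restrict measurableSet_Ioo] with x hx
  exact mul_nonneg (rpow_nonneg hx.1.le _) (rpow_nonneg (sub_pos.2 hx.2).le _)

end BetaIntegral

section Substitution

variable {a : ℝ}

lemma image_mul_div_one_sub_Ioo (ha : 0 < a) :
    (fun x : ℝ => a * x / (1 - x)) '' Ioo 0 1 = Ioi 0 := by
  ext l
  refine ⟨?_, fun (hl : 0 < l) => ?_⟩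
  · rintro ⟨x, hx, rfl⟩
    exact div_pos (mul_pos ha hx.1) (sub_pos.2 hx.2)
  · refine ⟨l / (a + l), ⟨by positivity, (div_lt_one (by positivity)).2 (by linarith)⟩, ?_⟩
    dsimp only
    rw [one_sub_div (by positivity), add_sub_cancel_right]
    field_simp

lemma injOn_mul_div_one_sub (ha : 0 < a) :
    InjOn (fun x : ℝ => a * x / (1 - x)) (Ioo 0 1) := by
  intro x hx y hy h
  rw [div_eq_div_iff (sub_pos.2 hx.2).ne' (sub_pos.2 hy.2).ne'] at h
  nlinarith

lemma hasDerivAt_mul_div_one_sub {x : ℝ} (hx : x ≠ 1) :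
    HasDerivAt (fun x : ℝ => a * x / (1 - x)) (a / (1 - x) ^ 2) x := by
  have hnum : HasDerivAt (fun x : ℝ => a * x) a x := by
    simpa using (hasDerivAt_id x).const_mul a
  have hden : HasDerivAt (fun x : ℝ => 1 - x) (-1) x := by
    simpa using (hasDerivAt_id x).const_sub 1
  rw [show a / (1 - x) ^ 2 = (a * (1 - x) - a * x * -1) / (1 - x) ^ 2 by ring]
  exact hnum.div hden (sub_ne_zero.2 hx.symm)

lemma lintegral_rpow_mul_div_add {s : ℝ} (hs : 0 < s) (hs1 : s < 1) (ha : 0 < a) :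
    ∫⁻ l in Ioi 0, ENNReal.ofReal (l ^ (s - 1) * (a / (a + l)))
      = ENNReal.ofReal (a ^ s * (π / sin (π * s))) := by
  rw [← image_mul_div_one_sub_Ioo ha, lintegral_image_eq_lintegral_abs_deriv_mul measurableSet_Ioo
    (fun x hx => (hasDerivAt_mul_div_one_sub hx.2.ne).hasDerivWithinAt)
    (injOn_mul_div_one_sub ha)]
  calc ∫⁻ x in Ioo 0 1, ENNReal.ofReal |a / (1 - x) ^ 2|
        * ENNReal.ofReal ((a * x / (1 - x)) ^ (s - 1) * (a / (a + a * x / (1 - x))))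
      = ∫⁻ x in Ioo 0 1, ENNReal.ofReal (a ^ s)
          * ENNReal.ofReal (x ^ (s - 1) * (1 - x) ^ (-s)) := by
        refine setLIntegral_congr_fun measurableSet_Ioo fun x ⟨hx0, hx1⟩ => ?_
        have hx1 : 0 < 1 - x := sub_pos.2 hx1
        have hfrac : a / (a + a * x / (1 - x)) = 1 - x := by
          field_simp
          ring
        rw [abs_of_nonneg (by positivity), ← ENNReal.ofReal_mul (by positivity),
          ← ENNReal.ofReal_mul (by positivity), hfrac, div_rpow (by positivity) hx1.le,
          mul_rpow ha.le hx0.le, rpow_neg hx1.le, rpow_sub_one ha.ne', rpow_sub_one hx1.ne']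
        congr 1
        field_simp
    _ = ENNReal.ofReal (a ^ s * (π / sin (π * s))) := by
        rw [lintegral_const_mul' _ _ ENNReal.ofReal_ne_top,
          lintegral_rpow_mul_one_sub_rpow_neg hs hs1, ENNReal.ofReal_mul (by positivity)]

end Substitution

lemma summable_div_add {ι : Type*} {lam : ι → ℝ} (hpos : ∀ i, 0 ≤ lam i) (hsum : Summable lam)
    {l : ℝ} (hl : 0 < l) : Summable fun i => lam i / (lam i + l) :=
  hsum.div_const l |>.of_nonneg_of_le (fun i => by have := hpos i; positivity)
    fun i => div_le_div_of_nonneg_left (hpos i) hl (le_add_of_nonneg_left (hpos i))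

lemma lintegral_rpow_mul_tsum_div_add {ι : Type*} [Countable ι] {lam : ι → ℝ}
    (hpos : ∀ i, 0 ≤ lam i) (hsum : Summable lam) (s : ℝ) :
    ∫⁻ l in Ioi 0, ENNReal.ofReal (l ^ (s - 1) * ∑' i, lam i / (lam i + l))
      = ∑' i, ∫⁻ l in Ioi 0, ENNReal.ofReal (l ^ (s - 1) * (lam i / (lam i + l))) := by
  rw [← lintegral_tsum fun i => by fun_prop]
  refine setLIntegral_congr_fun measurableSet_Ioi fun l (hl : 0 < l) => ?_
  rw [← tsum_mul_left, ENNReal.ofReal_tsum_of_nonneg (fun i => by have := hpos i; positivity)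
    ((summable_div_add hpos hsum hl).mul_left _)]

/-- For a summable sequence of positive reals `(λ_i)` and `0 < s < 1`,
`Σ λ_i^s = (sin(πs)/π) · ∫₀^∞ λ^{s-1} N(λ) dλ` as an identity in `[0,∞]`,
where `N(λ) = Σ λ_i/(λ_i+λ)` is the effective dimension. -/
theorem stmt1 (lam : ℕ → ℝ) (hpos : ∀ i, 0 < lam i) (hsum : Summable lam)
    (s : ℝ) (hs : 0 < s) (hs1 : s < 1) :
    ∑' i, ENNReal.ofReal (lam i ^ s)
      = ENNReal.ofReal (Real.sin (Real.pi * s) / Real.pi) *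
        ∫⁻ l in Set.Ioi (0 : ℝ),
          ENNReal.ofReal (l ^ (s - 1) * ∑' i, lam i / (lam i + l)) := by
  have hsin : 0 < sin (π * s) := sin_pos_of_pos_of_lt_pi (by positivity) (by nlinarith [pi_pos])
  rw [lintegral_rpow_mul_tsum_div_add (fun i => (hpos i).le) hsum, ← ENNReal.tsum_mul_left]
  refine tsum_congr fun i => ?_
  rw [lintegral_rpow_mul_div_add hs hs1 (hpos i), ← ENNReal.ofReal_mul (by positivity)]
  congr 1
  field_simp
end

section
/- Let (λ_i)_{i≥1} be a sequence of positive real numbers with Σ_{i=1}^∞ λ_i < ∞, and let 0 < s < 1. If Σ_{i=1}^∞ λ_i^s < ∞, then for every λ > 0 one has N(λ) ≤ (π/sin(πs)) · (Σ_{i=1}^∞ λ_i^s) · λ^{-s}; in particular N(λ) = O(λ^{-s}) as λ ↓ 0. -/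
/-!
Each term of the effective dimension is at most `min 1 (λᵢ/λ) ≤ (λᵢ/λ)^s`, since `0 < s < 1`;
summing gives `N(λ) ≤ (Σ λᵢ^s) λ^{-s}`, and `π / sin (π s) ≥ π > 1` absorbs the constant.
-/

open Real

theorem div_add_le_div_rpow {x l s : ℝ} (hx : 0 ≤ x) (hl : 0 < l) (hs0 : 0 ≤ s) (hs1 : s ≤ 1) :
    x / (x + l) ≤ (x / l) ^ s := by
  rcases le_or_gt x l with hxl | hlx
  · calc x / (x + l) ≤ x / l := div_le_div_of_nonneg_left hx hl (by linarith)
      _ ≤ (x / l) ^ s :=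
        self_le_rpow_of_le_one (div_nonneg hx hl.le) ((div_le_one hl).mpr hxl) hs1
  · calc x / (x + l) ≤ 1 := (div_le_one (by linarith)).mpr (by linarith)
      _ ≤ (x / l) ^ s := one_le_rpow ((one_le_div hl).mpr hlx.le) hs0

theorem tsum_div_add_le_tsum_rpow_mul {ι : Type*} {f : ι → ℝ} (hf : ∀ i, 0 ≤ f i) {s : ℝ}
    (hs0 : 0 ≤ s) (hs1 : s ≤ 1) (hfs : Summable fun i => f i ^ s) {l : ℝ} (hl : 0 < l) :
    ∑' i, f i / (f i + l) ≤ (∑' i, f i ^ s) * l ^ (-s) := by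
  have hterm : ∀ i, f i / (f i + l) ≤ f i ^ s * l ^ (-s) := fun i => by
    rw [rpow_neg hl.le, ← div_eq_mul_inv, ← div_rpow (hf i) hl.le]
    exact div_add_le_div_rpow (hf i) hl hs0 hs1
  have hsummable : Summable fun i => f i ^ s * l ^ (-s) := hfs.mul_right _
  calc ∑' i, f i / (f i + l)
      ≤ ∑' i, f i ^ s * l ^ (-s) :=
        Summable.tsum_le_tsum hterm
          (hsummable.of_nonneg_of_le (fun i => div_nonneg (hf i) (by linarith [hf i])) hterm)
          hsummable
    _ = (∑' i, f i ^ s) * l ^ (-s) := tsum_mul_right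

theorem one_le_pi_div_sin_pi_mul {s : ℝ} (hs0 : 0 < s) (hs1 : s < 1) :
    1 ≤ π / sin (π * s) := by
  have hsin : 0 < sin (π * s) :=
    sin_pos_of_pos_of_lt_pi (by positivity) (by nlinarith [pi_pos])
  rw [one_le_div hsin]
  linarith [sin_le_one (π * s), pi_gt_three]

theorem stmt2_general (lam : ℕ → ℝ) (hpos : ∀ i, 0 < lam i)
    (s : ℝ) (hs : 0 < s) (hs1 : s < 1)
    (hssum : Summable fun i => lam i ^ s) :
    ∀ l : ℝ, 0 < l →
      (∑' i, lam i / (lam i + l))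
        ≤ (Real.pi / Real.sin (Real.pi * s)) * (∑' i, lam i ^ s) * l ^ (-s) := by
  intro l hl
  have hbound : 0 ≤ (∑' i, lam i ^ s) * l ^ (-s) :=
    mul_nonneg (tsum_nonneg fun i => rpow_nonneg (hpos i).le _) (rpow_nonneg hl.le _)
  calc ∑' i, lam i / (lam i + l)
      ≤ (∑' i, lam i ^ s) * l ^ (-s) :=
        tsum_div_add_le_tsum_rpow_mul (fun i => (hpos i).le) hs.le hs1.le hssum hl
    _ ≤ (π / sin (π * s)) * ((∑' i, lam i ^ s) * l ^ (-s)) :=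
        le_mul_of_one_le_left hbound (one_le_pi_div_sin_pi_mul hs hs1)
    _ = (π / sin (π * s)) * (∑' i, lam i ^ s) * l ^ (-s) := (mul_assoc _ _ _).symm

/-- If `Σ λ_i^s < ∞` then the effective dimension satisfies
`N(λ) ≤ (π/sin(πs)) · (Σ λ_i^s) · λ^{-s}` for every `λ > 0`. -/
theorem stmt2 (lam : ℕ → ℝ) (hpos : ∀ i, 0 < lam i) (hsum : Summable lam)
    (s : ℝ) (hs : 0 < s) (hs1 : s < 1)
    (hssum : Summable fun i => lam i ^ s) :
    ∀ l : ℝ, 0 < l →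
      (∑' i, lam i / (lam i + l))
        ≤ (Real.pi / Real.sin (Real.pi * s)) * (∑' i, lam i ^ s) * l ^ (-s) :=
  stmt2_general lam hpos s hs hs1 hssum
end

section
/- Let (λ_i)_{i≥1} be a sequence of positive real numbers with Σ_{i=1}^∞ λ_i < ∞, and let 0 < s < 1. If there exist constants C > 0 and δ > 0 such that N(λ) ≤ C·λ^{-s} for all λ ∈ (0, δ], then for every ε > 0 one has Σ_{i=1}^∞ λ_i^{s+ε} < ∞. -/
/-!
Sample `N` on the dyadic scale `lₖ = δ / 2 ^ k`. Every `λᵢ ≤ δ` lies in some `[lₖ, 2 lₖ]`, where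
`λᵢ / (λᵢ + lₖ) ≥ 1 / 2`, so `λᵢ ^ (s + ε) ≤ 2 ^ (s + ε + 1) ∑ₖ lₖ ^ (s + ε) λᵢ / (λᵢ + lₖ)`.
Summing over `i` and exchanging the nonnegative double series bounds `∑ᵢ λᵢ ^ (s + ε)` by a
multiple of `∑ₖ lₖ ^ (s + ε) N(lₖ) ≤ C ∑ₖ lₖ ^ ε`, a convergent geometric series; only finitely
many `λᵢ` exceed `δ`.
-/

open MeasureTheory Real

noncomputable def effectiveDimension {ι : Type*} (lam : ι → ℝ) (l : ℝ) : ℝ :=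
  ∑' i, lam i / (lam i + l)

noncomputable def dyadicWeight {ι : Type*} (lam : ι → ℝ) (p δ : ℝ) (k : ℕ) (i : ι) : ℝ :=
  (δ / 2 ^ k) ^ p * (lam i / (lam i + δ / 2 ^ k))

section

variable {ι : Type*} {lam : ι → ℝ}

lemma summable_div_add_const (hpos : ∀ i, 0 ≤ lam i) (hsum : Summable lam) {l : ℝ}
    (hl : 0 < l) : Summable fun i => lam i / (lam i + l) :=
  (hsum.div_const l).of_nonneg_of_le (fun i => div_nonneg (hpos i) (by linarith [hpos i]))
    fun i => div_le_div_of_nonneg_left (hpos i) hl (by linarith [hpos i])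

lemma summable_div_two_pow_rpow {δ ε : ℝ} (hδ : 0 ≤ δ) (hε : 0 < ε) :
    Summable fun k : ℕ => (δ / 2 ^ k) ^ ε := by
  have h2ε : 1 < (2 : ℝ) ^ ε := one_lt_rpow one_lt_two hε
  refine ((summable_geometric_of_lt_one (by positivity) (inv_lt_one_of_one_lt₀ h2ε)).mul_left
    (δ ^ ε)).congr fun k => ?_
  rw [div_rpow hδ (by positivity), ← rpow_natCast_mul zero_le_two, mul_comm (k : ℝ),
    rpow_mul_natCast zero_le_two, inv_pow, div_eq_mul_inv]

lemma exists_div_two_pow_le_le_two_mul {x δ : ℝ} (hx : 0 < x) (hxδ : x ≤ δ) :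
    ∃ k : ℕ, δ / 2 ^ k ≤ x ∧ x ≤ 2 * (δ / 2 ^ k) := by
  obtain ⟨n, hn, hn1⟩ := exists_nat_pow_near ((one_le_div hx).2 hxδ) one_lt_two
  refine ⟨n + 1, ?_, ?_⟩
  · rw [div_le_iff₀ (by positivity)]
    rw [div_lt_iff₀ hx] at hn1
    linarith
  · have hdouble : 2 * (δ / 2 ^ (n + 1)) = δ / 2 ^ n := by rw [pow_succ]; field_simp
    rw [hdouble, le_div_iff₀ (by positivity), mul_comm]
    rwa [le_div_iff₀ hx] at hn

lemma rpow_le_two_rpow_mul_div_add {x l p : ℝ} (hl : 0 < l) (hlx : l ≤ x) (hx2 : x ≤ 2 * l)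
    (hp : 0 ≤ p) : x ^ p ≤ 2 ^ (p + 1) * (l ^ p * (x / (x + l))) := by
  have hhalf : 1 ≤ 2 * (x / (x + l)) := by
    rw [← mul_div_assoc, le_div_iff₀ (by linarith)]
    linarith
  calc x ^ p ≤ (2 * l) ^ p := rpow_le_rpow (by linarith) hx2 hp
    _ = 2 ^ p * l ^ p * 1 := by rw [mul_rpow zero_le_two hl.le, mul_one]
    _ ≤ 2 ^ p * l ^ p * (2 * (x / (x + l))) := by gcongr
    _ = 2 ^ (p + 1) * (l ^ p * (x / (x + l))) := by rw [rpow_add_one two_ne_zero]; ring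

lemma dyadicWeight_nonneg (hpos : ∀ i, 0 ≤ lam i) {p δ : ℝ} (hδ : 0 < δ) (k : ℕ) (i : ι) :
    0 ≤ dyadicWeight lam p δ k i := by
  have hl : 0 < δ / 2 ^ k := by positivity
  exact mul_nonneg (rpow_nonneg hl.le p) (div_nonneg (hpos i) (by linarith [hpos i]))

lemma rpow_le_two_rpow_mul_dyadicWeight {p δ : ℝ} (hp : 0 ≤ p) (hδ : 0 < δ) {i : ι}
    (hi : 0 < lam i) (hiδ : lam i ≤ δ) :
    ∃ k, lam i ^ p ≤ 2 ^ (p + 1) * dyadicWeight lam p δ k i := by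
  obtain ⟨k, hk, hk2⟩ := exists_div_two_pow_le_le_two_mul hi hiδ
  exact ⟨k, rpow_le_two_rpow_mul_div_add (by positivity) hk hk2 hp⟩

lemma summable_dyadicWeight (hpos : ∀ i, 0 ≤ lam i) (hsum : Summable lam)
    {s ε C δ : ℝ} (hε : 0 < ε) (hδ : 0 < δ)
    (hN : ∀ l, 0 < l → l ≤ δ → effectiveDimension lam l ≤ C * l ^ (-s)) :
    Summable fun ki : ℕ × ι => dyadicWeight lam (s + ε) δ ki.1 ki.2 := by
  have hl (k : ℕ) : 0 < δ / 2 ^ k := by positivity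
  refine (summable_prod_of_nonneg fun ki => dyadicWeight_nonneg hpos hδ ki.1 ki.2).2
    ⟨fun k => (summable_div_add_const hpos hsum (hl k)).mul_left ((δ / 2 ^ k) ^ (s + ε)), ?_⟩
  refine ((summable_div_two_pow_rpow hδ.le hε).mul_left C).of_nonneg_of_le
    (fun k => tsum_nonneg (dyadicWeight_nonneg hpos hδ k)) fun k => ?_
  calc ∑' i, dyadicWeight lam (s + ε) δ k i
      = (δ / 2 ^ k) ^ (s + ε) * effectiveDimension lam (δ / 2 ^ k) := by
        rw [effectiveDimension, ← tsum_mul_left]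
        rfl
    _ ≤ (δ / 2 ^ k) ^ (s + ε) * (C * (δ / 2 ^ k) ^ (-s)) := by
      gcongr
      exact hN _ (hl k) (div_le_self hδ.le (one_le_pow₀ one_le_two))
    _ = C * (δ / 2 ^ k) ^ ε := by
      rw [mul_left_comm, ← rpow_add (hl k), add_neg_cancel_comm]

theorem summable_rpow_of_effectiveDimension_le (hpos : ∀ i, 0 < lam i) (hsum : Summable lam)
    {s ε C δ : ℝ} (hs : 0 ≤ s) (hε : 0 < ε) (hδ : 0 < δ)
    (hN : ∀ l, 0 < l → l ≤ δ → effectiveDimension lam l ≤ C * l ^ (-s)) :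
    Summable fun i => lam i ^ (s + ε) := by
  have hnonneg i := (hpos i).le
  have hdyadic := (summable_dyadicWeight hnonneg hsum hε hδ hN).prod_symm
  refine .of_norm_bounded_eventually (hdyadic.prod.mul_left (2 ^ (s + ε + 1))) ?_
  filter_upwards [hsum.tendsto_cofinite_zero.eventually (ge_mem_nhds hδ)] with i hiδ
  obtain ⟨k, hk⟩ := rpow_le_two_rpow_mul_dyadicWeight (p := s + ε) (by positivity) hδ (hpos i) hiδ
  rw [norm_of_nonneg (rpow_nonneg (hpos i).le _)]
  refine hk.trans (mul_le_mul_of_nonneg_left ?_ (by positivity))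
  exact (hdyadic.prod_factor i).le_tsum k fun j _ => dyadicWeight_nonneg hnonneg hδ j i

end

theorem stmt3_general (lam : ℕ → ℝ) (hpos : ∀ i, 0 < lam i) (hsum : Summable lam)
    (s : ℝ) (hs : 0 < s)
    (C δ : ℝ) (hδ : 0 < δ)
    (hN : ∀ l : ℝ, 0 < l → l ≤ δ →
      (∑' i, lam i / (lam i + l)) ≤ C * l ^ (-s)) :
    ∀ ε : ℝ, 0 < ε → Summable fun i => lam i ^ (s + ε) :=
  fun _ hε => summable_rpow_of_effectiveDimension_le hpos hsum hs.le hε hδ hN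

/-- If the effective dimension satisfies `N(λ) ≤ C·λ^{-s}` for `λ ∈ (0,δ]`,
then `Σ λ_i^{s+ε} < ∞` for every `ε > 0`. -/
theorem stmt3 (lam : ℕ → ℝ) (hpos : ∀ i, 0 < lam i) (hsum : Summable lam)
    (s : ℝ) (hs : 0 < s) (hs1 : s < 1)
    (C δ : ℝ) (hC : 0 < C) (hδ : 0 < δ)
    (hN : ∀ l : ℝ, 0 < l → l ≤ δ →
      (∑' i, lam i / (lam i + l)) ≤ C * l ^ (-s)) :
    ∀ ε : ℝ, 0 < ε → Summable fun i => lam i ^ (s + ε) :=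
  stmt3_general lam hpos hsum s hs C δ hδ hN
end

section
/- Let (λ_i)_{i≥1} be a sequence of positive real numbers with Σ_{i=1}^∞ λ_i < ∞, let 0 < s < 1, and suppose there is a constant C > 0 such that λ_i ≤ C·i^{-1/s} for all i ≥ 1. Then for every λ > 0 one has N(λ) ≤ C^s · λ^{-s} · ∫₀^∞ (1+u^{1/s})^{-1} du, where the integral ∫₀^∞ (1+u^{1/s})^{-1} du is finite; in particular N(λ) = O(λ^{-s}) as λ ↓ 0. -/
/-!
Since `x ↦ x / (x + λ)` is increasing, `λ_i / (λ_i + λ)` is at most its value at the bound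
`C i^{-1/s}`, which with `a = (λ / C)^s` equals `f (a i)` for `f u = (1 + u^{1/s})⁻¹`. As `f` is
decreasing, `∑_{i ≥ 1} f (a i) ≤ ∫₀^∞ f (a u) du = a⁻¹ ∫₀^∞ f`, and `a⁻¹ = C^s λ^{-s}`.
-/

open MeasureTheory Real Set Finset

theorem integrableOn_Ioi_inv_one_add_rpow {p : ℝ} (hp : 1 < p) :
    IntegrableOn (fun u : ℝ => (1 + u ^ p)⁻¹) (Ioi 0) := by
  have hmeas : AEStronglyMeasurable (fun u : ℝ => (1 + u ^ p)⁻¹) :=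
    (continuous_const.add (continuous_rpow_const (by linarith))).measurable.inv
      |>.aestronglyMeasurable
  rw [← Ioc_union_Ioi_eq_Ioi zero_le_one]
  refine IntegrableOn.union ?_ ?_
  · refine (integrableOn_const (C := (1 : ℝ)) (by simp)).mono' hmeas.restrict ?_
    filter_upwards [ae_restrict_mem measurableSet_Ioc] with u hu
    have : 0 ≤ u ^ p := rpow_nonneg hu.1.le p
    rw [norm_inv, Real.norm_of_nonneg (by linarith)]
    exact inv_le_one_of_one_le₀ (by linarith)
  · refine (integrableOn_Ioi_rpow_of_lt (neg_lt_neg hp) one_pos).mono' hmeas.restrict ?_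
    filter_upwards [ae_restrict_mem measurableSet_Ioi] with u (hu : 1 < u)
    have : 0 < u ^ p := rpow_pos_of_pos (by linarith) p
    rw [norm_inv, Real.norm_of_nonneg (by linarith), rpow_neg (by linarith)]
    exact inv_anti₀ this (by linarith)

theorem antitoneOn_inv_one_add_rpow {p : ℝ} (hp : 0 ≤ p) :
    AntitoneOn (fun u : ℝ => (1 + u ^ p)⁻¹) (Ici 0) := fun x (hx : 0 ≤ x) _ _ hxy =>
  inv_anti₀ (by positivity) (by linarith [rpow_le_rpow hx hxy hp])

theorem sum_range_le_inv_mul_setIntegral_Ioi {f : ℝ → ℝ} (hf : AntitoneOn f (Ici 0))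
    (hf0 : ∀ u, 0 < u → 0 ≤ f u) (hint : IntegrableOn f (Ioi 0)) {a : ℝ} (ha : 0 < a)
    (n : ℕ) : ∑ i ∈ range n, f (a * (i + 1)) ≤ a⁻¹ * ∫ u in Ioi 0, f u := by
  have hscaled : AntitoneOn (fun u => f (a * u)) (Icc 0 (0 + n)) := fun x hx y hy hxy =>
    hf (mul_nonneg ha.le hx.1) (mul_nonneg ha.le hy.1) (mul_le_mul_of_nonneg_left hxy ha.le)
  have hinterval : ∫ u in (0 : ℝ)..a * n, f u ≤ ∫ u in Ioi 0, f u := by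
    rw [intervalIntegral.integral_of_le (by positivity)]
    exact setIntegral_mono_set hint ((ae_restrict_iff' measurableSet_Ioi).2 (.of_forall hf0))
      Ioc_subset_Ioi_self.eventuallyLE
  calc ∑ i ∈ range n, f (a * (i + 1)) = ∑ i ∈ range n, f (a * (0 + ↑(i + 1))) := by simp
    _ ≤ ∫ u in (0 : ℝ)..0 + n, f (a * u) := hscaled.sum_le_integral
    _ = a⁻¹ * ∫ u in (0 : ℝ)..a * n, f u := by
      simp [intervalIntegral.integral_comp_mul_left f ha.ne']
    _ ≤ a⁻¹ * ∫ u in Ioi 0, f u := by gcongr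

theorem div_add_le_div_add {x y l : ℝ} (hx : 0 ≤ x) (hl : 0 < l) (hxy : x ≤ y) :
    x / (x + l) ≤ y / (y + l) := by
  rw [div_le_div_iff₀ (by linarith) (by linarith)]
  nlinarith

theorem mul_rpow_neg_inv_div_add_eq {s C l x : ℝ} (hs : 0 < s) (hC : 0 < C) (hl : 0 ≤ l)
    (hx : 0 < x) :
    C * x ^ (-(1 / s)) / (C * x ^ (-(1 / s)) + l) = (1 + ((l / C) ^ s * x) ^ (1 / s))⁻¹ := by
  have hroot : ((l / C) ^ s * x) ^ (1 / s) = l / C * x ^ (1 / s) := by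
    rw [mul_rpow (by positivity) hx.le, one_div, rpow_rpow_inv (by positivity) hs.ne']
  have : 0 < x ^ (1 / s) := rpow_pos_of_pos hx _
  rw [hroot, rpow_neg hx.le]
  field_simp

theorem stmt4_general (lam : ℕ → ℝ) (hpos : ∀ i, 0 < lam i)
    (s : ℝ) (hs : 0 < s) (hs1 : s < 1)
    (C : ℝ) (hC : 0 < C)
    (hbd : ∀ i : ℕ, lam i ≤ C * ((i : ℝ) + 1) ^ (-(1 / s))) :
    IntegrableOn (fun u : ℝ => (1 + u ^ (1 / s))⁻¹) (Set.Ioi 0) ∧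
      ∀ l : ℝ, 0 < l →
        (∑' i, lam i / (lam i + l))
          ≤ C ^ s * l ^ (-s) * ∫ u in Set.Ioi (0 : ℝ), (1 + u ^ (1 / s))⁻¹ := by
  have hint := integrableOn_Ioi_inv_one_add_rpow (one_lt_one_div hs hs1)
  refine ⟨hint, fun l hl => ?_⟩
  have ha : 0 < (l / C) ^ s := by positivity
  have hterm (i : ℕ) : lam i / (lam i + l) ≤ (1 + ((l / C) ^ s * (i + 1)) ^ (1 / s))⁻¹ :=
    (div_add_le_div_add (hpos i).le hl (hbd i)).trans_eq
      (mul_rpow_neg_inv_div_add_eq hs hC hl.le (by positivity))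
  have hpartial (n : ℕ) :
      ∑ i ∈ range n, lam i / (lam i + l)
        ≤ ((l / C) ^ s)⁻¹ * ∫ u in Ioi 0, (1 + u ^ (1 / s))⁻¹ :=
    (sum_le_sum fun i _ => hterm i).trans <|
      sum_range_le_inv_mul_setIntegral_Ioi (antitoneOn_inv_one_add_rpow (by positivity))
        (fun u hu => by positivity) hint ha n
  have hscale : ((l / C) ^ s)⁻¹ = C ^ s * l ^ (-s) := by
    rw [← inv_rpow (by positivity), inv_div, div_rpow hC.le hl.le, rpow_neg hl.le, div_eq_mul_inv]
  rw [← hscale]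
  exact Real.tsum_le_of_sum_range_le (fun i => div_nonneg (hpos i).le (by linarith [hpos i]))
    hpartial

/-- If `λ_i ≤ C·i^{-1/s}` for all `i ≥ 1` (here `lam i` denotes `λ_{i+1}`),
then `N(λ) ≤ C^s · λ^{-s} · ∫₀^∞ (1+u^{1/s})^{-1} du` for every `λ > 0`,
and the integral `∫₀^∞ (1+u^{1/s})^{-1} du` is finite. -/
theorem stmt4 (lam : ℕ → ℝ) (hpos : ∀ i, 0 < lam i) (hsum : Summable lam)
    (s : ℝ) (hs : 0 < s) (hs1 : s < 1)
    (C : ℝ) (hC : 0 < C)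
    (hbd : ∀ i : ℕ, lam i ≤ C * ((i : ℝ) + 1) ^ (-(1 / s))) :
    IntegrableOn (fun u : ℝ => (1 + u ^ (1 / s))⁻¹) (Set.Ioi 0) ∧
      ∀ l : ℝ, 0 < l →
        (∑' i, lam i / (lam i + l))
          ≤ C ^ s * l ^ (-s) * ∫ u in Set.Ioi (0 : ℝ), (1 + u ^ (1 / s))⁻¹ :=
  stmt4_general lam hpos s hs hs1 C hC hbd
end

section
/- For any real numbers γ₁ > γ₂ > 0 there exists a non-increasing sequence (a_k)_{k≥1} of positive real numbers such that limsup_{k→∞} a_k·k^{γ₂} = 1 and liminf_{k→∞} a_k·k^{γ₁} = 1. In particular, there exists a non-increasing positive sequence (a_k) for which no exponent γ > 0 satisfies a_k ≍ k^{-γ} (i.e., a_k/k^{-γ} bounded away from 0 and ∞). -/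
open Filter Real Topology

/-!
Put `r = γ₁ / γ₂ > 1`, cut `[2, ∞)` into the blocks `[b, b ^ r)` with `b = 2 ^ r ^ m`, and
let `a_k = b ^ (-γ₁)` when `k + 2` lies in the block of `b`. Since `b ^ (-γ₁) = (b ^ r) ^ (-γ₂)`,
we get `a_k k ^ γ₁ = (k / b) ^ γ₁` and `a_k k ^ γ₂ = (k / b ^ r) ^ γ₂`. The first is at least
`(k / (k + 2)) ^ γ₁` and is at most `1` at the left end of every block; the second is at most `1`
and is at least `(k / (k + 3)) ^ γ₂` at the right end of every block. If `a_k ≍ k ^ (-γ)`, then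
`k ^ (γ - γ₁)` would stay bounded below along the left ends and `k ^ (γ - γ₂)` bounded above along
the right ends, which is impossible for every `γ` because `γ₂ < γ₁`.
-/

section LimsupLiminf

variable {α : Type*} {f : Filter α} {u v : α → ℝ} {L : ℝ}

theorem Filter.Frequently.const_le_of_tendsto (h : ∃ᶠ x in f, v x ≤ u x)
    (hv : Tendsto v f (𝓝 L)) {c : ℝ} (hc : c < L) : ∃ᶠ x in f, c ≤ u x :=
  (h.and_eventually (hv.eventually (eventually_ge_nhds hc))).mono fun _ h ↦ h.2.trans h.1

theorem limsup_eq_of_eventually_le_of_frequently_ge (hle : ∀ᶠ x in f, u x ≤ L)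
    (hge : ∀ c < L, ∃ᶠ x in f, c ≤ u x) : limsup u f = L :=
  le_antisymm
    (limsup_le_of_le (IsCoboundedUnder.of_frequently_ge (hge (L - 1) (by linarith))) hle)
    (le_of_forall_lt_imp_le_of_dense fun c hc ↦
      le_limsup_of_frequently_le (hge c hc) (isBoundedUnder_of_eventually_le hle))

theorem liminf_eq_of_frequently_le_of_eventually_ge (hle : ∃ᶠ x in f, u x ≤ L)
    (hge : ∀ c < L, ∀ᶠ x in f, c ≤ u x) : liminf u f = L :=
  le_antisymm
    (liminf_le_of_frequently_le hle (isBoundedUnder_of_eventually_ge (hge (L - 1) (by linarith))))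
    (le_of_forall_lt_imp_le_of_dense fun c hc ↦
      le_liminf_of_le (IsCoboundedUnder.of_frequently_le hle) (hge c hc))

end LimsupLiminf

section PowerComparison

variable {u : ℕ → ℝ} {γ₀ γ : ℝ}

theorem rpow_neg_mul_rpow {b x : ℝ} (hb : 0 < b) (hx : 0 ≤ x) (p : ℝ) :
    b ^ (-p) * x ^ p = (x / b) ^ p := by
  rw [div_rpow hx hb.le, rpow_neg hb.le, div_eq_inv_mul]

theorem tendsto_natCast_div_add_rpow (c : ℝ) (hγ : 0 ≤ γ) :
    Tendsto (fun k : ℕ ↦ ((k : ℝ) / (k + c)) ^ γ) atTop (𝓝 1) := by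
  simpa using (tendsto_natCast_div_add_atTop c).rpow_const (Or.inr hγ)

theorem not_eventually_le_mul_rpow_of_frequently_le {c M : ℝ} (hγ : γ < γ₀) (hc : 0 < c)
    (h : ∃ᶠ k in atTop, u k * (k : ℝ) ^ γ₀ ≤ M) : ¬ ∀ᶠ k in atTop, c ≤ u k * (k : ℝ) ^ γ := by
  intro hlow
  have hsmall : Tendsto (fun k : ℕ ↦ M * (k : ℝ) ^ (γ - γ₀)) atTop (𝓝 0) := by
    have := (tendsto_rpow_neg_atTop (sub_pos.2 hγ)).comp tendsto_natCast_atTop_atTop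
    simpa [neg_sub] using this.const_mul M
  obtain ⟨k, hkM, hkc, hMc, hk⟩ := (h.and_eventually (hlow.and ((hsmall.eventually
    (eventually_lt_nhds hc)).and (eventually_gt_atTop 0)))).exists
  have hk : (0 : ℝ) < k := Nat.cast_pos.2 hk
  have hsplit : u k * (k : ℝ) ^ γ = u k * (k : ℝ) ^ γ₀ * (k : ℝ) ^ (γ - γ₀) := by
    rw [mul_assoc, ← rpow_add hk, add_sub_cancel]
  have := mul_le_mul_of_nonneg_right hkM (rpow_pos_of_pos hk (γ - γ₀)).le
  linarith

theorem not_eventually_mul_rpow_le_of_frequently_ge {m C : ℝ} (hγ : γ₀ < γ) (hm : 0 < m)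
    (h : ∃ᶠ k in atTop, m ≤ u k * (k : ℝ) ^ γ₀) : ¬ ∀ᶠ k in atTop, u k * (k : ℝ) ^ γ ≤ C := by
  intro hup
  have hlarge : Tendsto (fun k : ℕ ↦ m * (k : ℝ) ^ (γ - γ₀)) atTop atTop :=
    ((tendsto_rpow_atTop (sub_pos.2 hγ)).comp tendsto_natCast_atTop_atTop).const_mul_atTop hm
  obtain ⟨k, hkm, hkC, hCm, hk⟩ := (h.and_eventually (hup.and ((hlarge.eventually_gt_atTop C).and
    (eventually_gt_atTop 0)))).exists
  have hk : (0 : ℝ) < k := Nat.cast_pos.2 hk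
  have hsplit : u k * (k : ℝ) ^ γ = u k * (k : ℝ) ^ γ₀ * (k : ℝ) ^ (γ - γ₀) := by
    rw [mul_assoc, ← rpow_add hk, add_sub_cancel]
  have := mul_le_mul_of_nonneg_right hkm (rpow_pos_of_pos hk (γ - γ₀)).le
  linarith

end PowerComparison

theorem Monotone.frequently_lt_succ {α : Type*} [LinearOrder α] {u : ℕ → α} (hu : Monotone u)
    (h : ¬ BddAbove (Set.range u)) : ∃ᶠ n in atTop, u n < u (n + 1) := by
  rw [frequently_atTop]
  intro N
  by_contra! hN
  refine h ⟨u N, Set.forall_mem_range.2 fun n ↦ ?_⟩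
  rcases le_total n N with hn | hn
  · exact hu hn
  · induction n, hn using Nat.le_induction with
    | base => exact le_rfl
    | succ n hn ih => exact (hN n hn).trans ih

section Blocks

variable {r x y : ℝ}

theorem zpow_floor_logb_le (hr : 1 < r) {t : ℝ} (ht : 0 < t) : r ^ ⌊logb r t⌋ ≤ t :=
  calc r ^ ⌊logb r t⌋ = r ^ (⌊logb r t⌋ : ℝ) := (rpow_intCast r _).symm
    _ ≤ r ^ logb r t := rpow_le_rpow_of_exponent_le hr.le (Int.floor_le _)
    _ = t := rpow_logb (by linarith) hr.ne' ht

theorem lt_zpow_floor_logb_add_one (hr : 1 < r) {t : ℝ} (ht : 0 < t) :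
    t < r ^ (⌊logb r t⌋ + 1) :=
  calc t = r ^ logb r t := (rpow_logb (by linarith) hr.ne' ht).symm
    _ < r ^ ((⌊logb r t⌋ + 1 : ℤ) : ℝ) := by
      rw [rpow_lt_rpow_left_iff hr]
      push_cast
      exact Int.lt_floor_add_one _
    _ = r ^ (⌊logb r t⌋ + 1) := rpow_intCast r _

/-- The left end `2 ^ r ^ m` of the block `[2 ^ r ^ m, 2 ^ r ^ (m + 1))` containing `x ≥ 2`;
these left ends are the paper's `b_{m+1}`. -/
noncomputable def blockStart (r x : ℝ) : ℝ := 2 ^ (r ^ ⌊logb r (logb 2 x)⌋)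

theorem blockStart_pos : 0 < blockStart r x := rpow_pos_of_pos two_pos _

theorem blockStart_le (hr : 1 < r) (hx : 1 < x) : blockStart r x ≤ x :=
  calc blockStart r x ≤ 2 ^ logb 2 x :=
        rpow_le_rpow_of_exponent_le one_le_two (zpow_floor_logb_le hr (logb_pos one_lt_two hx))
    _ = x := rpow_logb two_pos (by norm_num) (by linarith)

theorem lt_blockStart_rpow (hr : 1 < r) (hx : 1 < x) : x < blockStart r x ^ r :=
  calc x = 2 ^ logb 2 x := (rpow_logb two_pos (by norm_num) (by linarith)).symm
    _ < 2 ^ (r ^ (⌊logb r (logb 2 x)⌋ + 1)) :=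
        rpow_lt_rpow_of_exponent_lt one_lt_two
          (lt_zpow_floor_logb_add_one hr (logb_pos one_lt_two hx))
    _ = blockStart r x ^ r := by
        rw [blockStart, ← rpow_mul zero_le_two, zpow_add_one₀ (by positivity)]

theorem blockStart_le_blockStart (hr : 1 < r) (hx : 1 < x) (hxy : x ≤ y) :
    blockStart r x ≤ blockStart r y := by
  have hlog : logb 2 x ≤ logb 2 y := logb_le_logb_of_le one_lt_two (by linarith) hxy
  exact rpow_le_rpow_of_exponent_le one_le_two (zpow_le_zpow_right₀ hr.le
    (Int.floor_mono (logb_le_logb_of_le hr (logb_pos one_lt_two hx) hlog)))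

theorem blockStart_rpow_le_of_lt (hr : 1 < r) (h : blockStart r x < blockStart r y) :
    blockStart r x ^ r ≤ blockStart r y := by
  have hxy : ⌊logb r (logb 2 x)⌋ < ⌊logb r (logb 2 y)⌋ :=
    (zpow_lt_zpow_iff_right₀ hr).1 ((rpow_lt_rpow_left_iff one_lt_two).1 h)
  rw [blockStart, ← rpow_mul zero_le_two, ← zpow_add_one₀ (by positivity)]
  exact rpow_le_rpow_of_exponent_le one_le_two (zpow_le_zpow_right₀ hr.le hxy)

theorem monotone_blockStart_add_two (hr : 1 < r) : Monotone fun k : ℕ ↦ blockStart r (k + 2) :=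
  fun m n hmn ↦ blockStart_le_blockStart hr (by linarith [m.cast_nonneg (α := ℝ)]) (by gcongr)

theorem not_bddAbove_blockStart_add_two (hr : 1 < r) :
    ¬ BddAbove (Set.range fun k : ℕ ↦ blockStart r (k + 2)) := by
  rintro ⟨M, hM⟩
  obtain ⟨k, hk⟩ := exists_nat_gt (M ^ r)
  have hlt := lt_blockStart_rpow hr (x := k + 2) (by linarith [k.cast_nonneg (α := ℝ)])
  have hle := rpow_le_rpow blockStart_pos.le (hM ⟨k, rfl⟩) (by linarith : 0 ≤ r)
  linarith

theorem frequently_blockStart_rpow_le (hr : 1 < r) :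
    ∃ᶠ k : ℕ in atTop, blockStart r (k + 2) ^ r ≤ blockStart r (k + 3) := by
  refine ((monotone_blockStart_add_two hr).frequently_lt_succ
    (not_bddAbove_blockStart_add_two hr)).mono fun k hk ↦ ?_
  have hk3 : ((k + 1 : ℕ) : ℝ) + 2 = k + 3 := by push_cast; ring
  exact blockStart_rpow_le_of_lt hr (hk3 ▸ hk)

end Blocks

section BlockSequence

variable {γ₁ γ₂ : ℝ}

/-- The paper's `f (k + 2)` rather than `f (k + 1)`, so that the argument is `≥ 2` also at
`k = 0`. -/
noncomputable def blockSeq (γ₁ γ₂ : ℝ) (k : ℕ) : ℝ := blockStart (γ₁ / γ₂) (k + 2) ^ (-γ₁)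

theorem blockSeq_pos (k : ℕ) : 0 < blockSeq γ₁ γ₂ k := rpow_pos_of_pos blockStart_pos _

theorem blockSeq_antitone (h2 : 0 < γ₂) (h21 : γ₂ < γ₁) : Antitone (blockSeq γ₁ γ₂) :=
  fun _ _ hmn ↦ rpow_le_rpow_of_nonpos blockStart_pos
    (monotone_blockStart_add_two ((one_lt_div h2).2 h21) hmn) (by linarith)

theorem blockSeq_mul_rpow_left (k : ℕ) :
    blockSeq γ₁ γ₂ k * (k : ℝ) ^ γ₁ = ((k : ℝ) / blockStart (γ₁ / γ₂) (k + 2)) ^ γ₁ :=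
  rpow_neg_mul_rpow blockStart_pos k.cast_nonneg γ₁

theorem blockSeq_mul_rpow_right (h2 : 0 < γ₂) (k : ℕ) :
    blockSeq γ₁ γ₂ k * (k : ℝ) ^ γ₂ =
      ((k : ℝ) / blockStart (γ₁ / γ₂) (k + 2) ^ (γ₁ / γ₂)) ^ γ₂ := by
  rw [← rpow_neg_mul_rpow (rpow_pos_of_pos blockStart_pos _) k.cast_nonneg, ← rpow_mul
    blockStart_pos.le, mul_neg, div_mul_cancel₀ _ h2.ne', blockSeq]

theorem div_add_two_rpow_le_blockSeq_mul_rpow (h2 : 0 < γ₂) (h21 : γ₂ < γ₁) (k : ℕ) :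
    ((k : ℝ) / (k + 2)) ^ γ₁ ≤ blockSeq γ₁ γ₂ k * (k : ℝ) ^ γ₁ := by
  rw [blockSeq_mul_rpow_left]
  refine rpow_le_rpow (by positivity) (div_le_div_of_nonneg_left k.cast_nonneg blockStart_pos
    (blockStart_le ((one_lt_div h2).2 h21) ?_)) (by linarith)
  linarith [k.cast_nonneg (α := ℝ)]

theorem blockSeq_mul_rpow_le_one (h2 : 0 < γ₂) (h21 : γ₂ < γ₁) (k : ℕ) :
    blockSeq γ₁ γ₂ k * (k : ℝ) ^ γ₂ ≤ 1 := by
  have hk : (1 : ℝ) < k + 2 := by linarith [k.cast_nonneg (α := ℝ)]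
  rw [blockSeq_mul_rpow_right h2]
  have hb := rpow_pos_of_pos (blockStart_pos (r := γ₁ / γ₂) (x := k + 2)) (γ₁ / γ₂)
  refine rpow_le_one (div_nonneg k.cast_nonneg hb.le) ((div_le_one hb).2 ?_) h2.le
  linarith [lt_blockStart_rpow ((one_lt_div h2).2 h21) hk]

theorem frequently_blockSeq_mul_rpow_le_one (h2 : 0 < γ₂) (h21 : γ₂ < γ₁) :
    ∃ᶠ k in atTop, blockSeq γ₁ γ₂ k * (k : ℝ) ^ γ₁ ≤ 1 := by
  have hr : 1 < γ₁ / γ₂ := (one_lt_div h2).2 h21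
  refine (tendsto_add_atTop_nat 1).frequently
    ((frequently_blockStart_rpow_le hr).mono fun k hk ↦ ?_)
  have hk2 : (1 : ℝ) < k + 2 := by linarith [k.cast_nonneg (α := ℝ)]
  have hk3 : ((k + 1 : ℕ) : ℝ) + 2 = k + 3 := by push_cast; ring
  rw [blockSeq_mul_rpow_left, hk3]
  refine rpow_le_one (div_nonneg (by positivity) blockStart_pos.le)
    ((div_le_one blockStart_pos).2 ?_) (by linarith)
  push_cast
  linarith [lt_blockStart_rpow hr hk2]

theorem frequently_div_add_three_rpow_le_blockSeq_mul_rpow (h2 : 0 < γ₂) (h21 : γ₂ < γ₁) :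
    ∃ᶠ k : ℕ in atTop, ((k : ℝ) / (k + 3)) ^ γ₂ ≤ blockSeq γ₁ γ₂ k * (k : ℝ) ^ γ₂ := by
  have hr : 1 < γ₁ / γ₂ := (one_lt_div h2).2 h21
  refine (frequently_blockStart_rpow_le hr).mono fun k hk ↦ ?_
  have hk3 : (1 : ℝ) < k + 3 := by linarith [k.cast_nonneg (α := ℝ)]
  rw [blockSeq_mul_rpow_right h2]
  exact rpow_le_rpow (by positivity) (div_le_div_of_nonneg_left k.cast_nonneg
    (rpow_pos_of_pos blockStart_pos _) (hk.trans (blockStart_le hr hk3))) h2.le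

end BlockSequence

/-- For any `γ₁ > γ₂ > 0` there is a non-increasing positive sequence `(a_k)`
with `limsup a_k·k^{γ₂} = 1` and `liminf a_k·k^{γ₁} = 1`; in particular no
exponent `γ > 0` satisfies `a_k ≍ k^{-γ}`. -/
theorem stmt7 (γ₁ γ₂ : ℝ) (h2 : 0 < γ₂) (h21 : γ₂ < γ₁) :
    ∃ a : ℕ → ℝ, (∀ k, 0 < a k) ∧ Antitone a ∧
      Filter.limsup (fun k : ℕ => a k * (k : ℝ) ^ γ₂) Filter.atTop = 1 ∧
      Filter.liminf (fun k : ℕ => a k * (k : ℝ) ^ γ₁) Filter.atTop = 1 ∧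
      ∀ γ : ℝ, 0 < γ →
        ¬ ∃ c C : ℝ, 0 < c ∧
            ∀ k : ℕ, 1 ≤ k → c ≤ a k * (k : ℝ) ^ γ ∧ a k * (k : ℝ) ^ γ ≤ C := by
  have hlow : ∀ c < 1, ∀ᶠ k in atTop, c ≤ blockSeq γ₁ γ₂ k * (k : ℝ) ^ γ₁ := fun c hc ↦
    ((tendsto_natCast_div_add_rpow 2 (h2.trans h21).le).eventually (eventually_ge_nhds hc)).mono
      fun k hk ↦ hk.trans (div_add_two_rpow_le_blockSeq_mul_rpow h2 h21 k)
  have hhigh : ∀ c < 1, ∃ᶠ k in atTop, c ≤ blockSeq γ₁ γ₂ k * (k : ℝ) ^ γ₂ := fun _ hc ↦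
    (frequently_div_add_three_rpow_le_blockSeq_mul_rpow h2 h21).const_le_of_tendsto
      (tendsto_natCast_div_add_rpow 3 h2.le) hc
  refine ⟨blockSeq γ₁ γ₂, blockSeq_pos, blockSeq_antitone h2 h21,
    limsup_eq_of_eventually_le_of_frequently_ge
      (Eventually.of_forall (blockSeq_mul_rpow_le_one h2 h21)) hhigh,
    liminf_eq_of_frequently_le_of_eventually_ge (frequently_blockSeq_mul_rpow_le_one h2 h21) hlow,
    fun γ _ ⟨c, C, hc, hcC⟩ ↦ ?_⟩
  have hbounds := (eventually_ge_atTop 1).mono hcC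
  rcases lt_or_ge γ γ₁ with hγ | hγ
  · exact not_eventually_le_mul_rpow_of_frequently_le hγ hc
      (frequently_blockSeq_mul_rpow_le_one h2 h21) (hbounds.mono fun _ ↦ And.left)
  · exact not_eventually_mul_rpow_le_of_frequently_ge (h21.trans_le hγ) one_half_pos
      (hhigh _ one_half_lt_one) (hbounds.mono fun _ ↦ And.right)
end

section
/- Let H be a Hilbert space, let A be a nonzero compact positive semi-definite (self-adjoint) bounded linear operator on H, let α > 0, let a ≤ b be integers, and let η_a, …, η_b be real numbers in (0, 1/‖A‖]. Then ‖A^α ∘ ∏_{j=a}^{b} (I − η_j A)‖² ≤ ((α/e)^{2α} + ‖A‖^{2α}) / (1 + (Σ_{j=a}^{b} η_j)^{2α}), where ‖·‖ is the operator norm, A^α is the real power of the positive operator A defined by the continuous functional calculus, and the product of operators is the composition (the factors commute). Moreover ‖∏_{j=a}^{b}(I − η_j A)‖ ≤ 1. -/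
open Real

/-!
The product is `cfc g A` with `g u = ∏ j, (1 - η j * u)`, so both norms are suprema over
`spectrum ℝ A ⊆ [0, ‖A‖]`. There every factor lies in `[0, 1]` and `1 - η u ≤ exp (-η u)`, so
`0 ≤ g u ≤ exp (-S u)` with `S = ∑ j, η j`. Hence `u ^ α g u ≤ ‖A‖ ^ α`, while
`S ^ α u ^ α g u ≤ (S u) ^ α exp (-S u) ≤ (α / e) ^ α`, since `t ^ α e ^ (-t)` is maximal at `t = α`.
Adding the squares of the two bounds gives the estimate.
-/

theorem cfc_list_prod_map {R A ι : Type*} {p : A → Prop} [CommSemiring R] [StarRing R]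
    [MetricSpace R] [IsTopologicalSemiring R] [ContinuousStar R] [TopologicalSpace A] [Ring A]
    [StarRing A] [Algebra R A] [ContinuousFunctionalCalculus R A p] (l : List ι) (f : ι → R → R)
    (a : A) (hf : ∀ i ∈ l, ContinuousOn (f i) (spectrum R a)) (ha : p a) :
    cfc (fun x ↦ (l.map fun i ↦ f i x).prod) a = (l.map fun i ↦ cfc (f i) a).prod := by
  induction l with
  | nil => exact cfc_const_one R a
  | cons i l ih =>
    simp only [List.forall_mem_cons] at hf
    simp only [List.map_cons, List.prod_cons]
    rw [cfc_mul _ _ a hf.1 (continuousOn_list_prod l fun j hj ↦ hf.2 j hj), ih hf.2]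

theorem cfc_one_sub_const_mul_id {R A : Type*} {p : A → Prop} [CommRing R] [StarRing R]
    [MetricSpace R] [IsTopologicalRing R] [ContinuousStar R] [TopologicalSpace A] [Ring A]
    [StarRing A] [Algebra R A] [ContinuousFunctionalCalculus R A p] (r : R) (a : A)
    (ha : p a) : cfc (fun x ↦ 1 - r * x) a = 1 - r • a := by
  rw [cfc_sub _ _ a, cfc_const_one R a, cfc_const_mul_id r a]

theorem sq_norm_cfc_le {𝕜 A : Type*} {p : A → Prop} [RCLike 𝕜] [NormedRing A] [StarRing A]
    [NormedAlgebra 𝕜 A] [IsometricContinuousFunctionalCalculus 𝕜 A p] {f : 𝕜 → 𝕜} {a : A}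
    {c : ℝ} (hc : 0 ≤ c) (h : ∀ x ∈ spectrum 𝕜 a, ‖f x‖ ^ 2 ≤ c) : ‖cfc f a‖ ^ 2 ≤ c :=
  (le_sqrt (norm_nonneg _) hc).mp <|
    norm_cfc_le (sqrt_nonneg c) fun x hx ↦ (le_sqrt (norm_nonneg _) hc).mpr (h x hx)

theorem spectrum_subset_Icc_norm {A : Type*} [CStarAlgebra A] [PartialOrder A]
    [StarOrderedRing A] {a : A} (ha : 0 ≤ a) : spectrum ℝ a ⊆ Set.Icc 0 ‖a‖ := by
  intro x hx
  rcases subsingleton_or_nontrivial A with _ | _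
  · simp [spectrum.of_subsingleton] at hx
  have hx0 := spectrum_nonneg_of_nonneg ha hx
  exact ⟨hx0, by simpa [abs_of_nonneg hx0] using spectrum.norm_le_norm_of_mem hx⟩

theorem Finset.prod_map_sort {ι M : Type*} [CommMonoid M] (r : ι → ι → Prop) [DecidableRel r]
    [IsTrans ι r] [Std.Antisymm r] [Std.Total r] (s : Finset ι) (f : ι → M) :
    ((s.sort r).map f).prod = ∏ i ∈ s, f i := by
  rw [Finset.prod_eq_multiset_prod, ← Finset.sort_eq s r, Multiset.map_coe, Multiset.prod_coe]

theorem sort_map_one_sub_smul_prod_eq_cfc {R A ι : Type*} {p : A → Prop} [CommRing R]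
    [StarRing R] [MetricSpace R] [IsTopologicalRing R] [ContinuousStar R] [TopologicalSpace A]
    [Ring A] [StarRing A] [Algebra R A] [ContinuousFunctionalCalculus R A p] [LinearOrder ι]
    (s : Finset ι) (η : ι → R) (a : A) (ha : p a) :
    ((s.sort (· ≤ ·)).map fun j ↦ 1 - η j • a).prod = cfc (fun u ↦ ∏ j ∈ s, (1 - η j * u)) a := by
  simp only [← Finset.prod_map_sort (· ≤ ·) s]
  rw [cfc_list_prod_map _ _ a (fun _ _ ↦ by fun_prop) ha]
  simp only [cfc_one_sub_const_mul_id _ a ha]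

theorem rpow_two_mul {x : ℝ} (hx : 0 ≤ x) (y : ℝ) : x ^ (2 * y) = (x ^ y) ^ 2 := by
  rw [mul_comm, ← rpow_mul_natCast hx, Nat.cast_ofNat]

theorem rpow_mul_exp_neg_le {α t : ℝ} (hα : 0 < α) (ht : 0 ≤ t) :
    t ^ α * exp (-t) ≤ (α / exp 1) ^ α := by
  have h_max : t * exp (-(t / α)) ≤ α / exp 1 := by
    have h := add_one_le_exp (t / α - 1)
    rw [sub_add_cancel, exp_sub, le_div_iff₀ (exp_pos 1), div_mul_eq_mul_div, div_le_iff₀ hα] at h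
    rw [exp_neg, ← div_eq_mul_inv, div_le_div_iff₀ (exp_pos _) (exp_pos _)]
    linarith
  calc t ^ α * exp (-t) = (t * exp (-(t / α))) ^ α := by
        rw [mul_rpow ht (exp_pos _).le, ← exp_mul, neg_mul, div_mul_cancel₀ t hα.ne']
    _ ≤ (α / exp 1) ^ α := by gcongr

theorem prod_one_sub_le_exp_neg_sum {ι : Type*} (s : Finset ι) {c : ι → ℝ}
    (hc : ∀ i ∈ s, c i ≤ 1) : ∏ i ∈ s, (1 - c i) ≤ exp (-∑ i ∈ s, c i) := by
  rw [← Finset.sum_neg_distrib, exp_sum]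
  exact Finset.prod_le_prod (fun i hi ↦ sub_nonneg.2 (hc i hi)) fun i _ ↦ one_sub_le_exp_neg _

theorem sq_rpow_mul_mul_one_add_rpow_le {α x M S y : ℝ} (hα : 0 < α) (hx : 0 ≤ x)
    (hxM : x ≤ M) (hS : 0 ≤ S) (hy : 0 ≤ y) (hy_exp : y ≤ exp (-(S * x))) :
    (x ^ α * y) ^ 2 * (1 + S ^ (2 * α)) ≤ (α / exp 1) ^ (2 * α) + M ^ (2 * α) := by
  have hy_one : y ≤ 1 := hy_exp.trans (exp_le_one_iff.2 (neg_nonpos.2 (mul_nonneg hS hx)))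
  have h_small : x ^ α * y ≤ M ^ α :=
    calc x ^ α * y ≤ x ^ α * 1 := by gcongr
      _ ≤ M ^ α := by rw [mul_one]; gcongr
  have h_decay : S ^ α * (x ^ α * y) ≤ (α / exp 1) ^ α :=
    calc S ^ α * (x ^ α * y) = (S * x) ^ α * y := by rw [mul_rpow hS hx, mul_assoc]
      _ ≤ (S * x) ^ α * exp (-(S * x)) := by gcongr
      _ ≤ (α / exp 1) ^ α := rpow_mul_exp_neg_le hα (by positivity)
  rw [rpow_two_mul hS, rpow_two_mul (by positivity), rpow_two_mul (hx.trans hxM)]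
  calc (x ^ α * y) ^ 2 * (1 + (S ^ α) ^ 2) = (S ^ α * (x ^ α * y)) ^ 2 + (x ^ α * y) ^ 2 := by
        ring
    _ ≤ ((α / exp 1) ^ α) ^ 2 + (M ^ α) ^ 2 := by gcongr

theorem stmt8_general {H : Type*} [NormedAddCommGroup H] [InnerProductSpace ℂ H]
    [CompleteSpace H] (A : H →L[ℂ] H) (hpos : A.IsPositive)
    (α : ℝ) (hα : 0 < α) (a b : ℤ) (η : ℤ → ℝ)
    (hη : ∀ j ∈ Finset.Icc a b, η j ∈ Set.Ioc (0 : ℝ) (1 / ‖A‖)) :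
    ‖cfc (fun u : ℝ => u ^ α) A *
          (((Finset.Icc a b).sort (· ≤ ·)).map
              (fun j => (1 : H →L[ℂ] H) - η j • A)).prod‖ ^ 2
        ≤ ((α / Real.exp 1) ^ (2 * α) + ‖A‖ ^ (2 * α)) /
            (1 + (∑ j ∈ Finset.Icc a b, η j) ^ (2 * α)) ∧
      ‖(((Finset.Icc a b).sort (· ≤ ·)).map
            (fun j => (1 : H →L[ℂ] H) - η j • A)).prod‖ ≤ 1 := by
  set s := Finset.Icc a b
  set S := ∑ j ∈ s, η j
  set g : ℝ → ℝ := fun u ↦ ∏ j ∈ s, (1 - η j * u)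
  have hA : 0 ≤ A := (ContinuousLinearMap.nonneg_iff_isPositive A).mpr hpos
  have hS : 0 ≤ S := Finset.sum_nonneg fun j hj ↦ (hη j hj).1.le
  have hg : ∀ x ∈ spectrum ℝ A, 0 ≤ x ∧ x ≤ ‖A‖ ∧ 0 ≤ g x ∧ g x ≤ exp (-(S * x)) := by
    intro x hx
    obtain ⟨hx0, hxA⟩ := spectrum_subset_Icc_norm hA hx
    have hstep : ∀ j ∈ s, η j * x ≤ 1 := fun j hj ↦
      calc η j * x ≤ 1 / ‖A‖ * ‖A‖ := mul_le_mul (hη j hj).2 hxA hx0 (by positivity)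
        _ ≤ 1 := by rw [one_div]; exact inv_mul_le_one
    refine ⟨hx0, hxA, Finset.prod_nonneg fun j hj ↦ sub_nonneg.2 (hstep j hj), ?_⟩
    simpa only [S, Finset.sum_mul] using prod_one_sub_le_exp_neg_sum s hstep
  rw [sort_map_one_sub_smul_prod_eq_cfc s η A hpos.isSelfAdjoint]
  constructor
  · rw [← cfc_mul _ _ A (continuous_rpow_const hα.le).continuousOn]
    refine sq_norm_cfc_le (by positivity) fun x hx ↦ ?_
    obtain ⟨hx0, hxA, hg0, hg_exp⟩ := hg x hx
    rw [norm_of_nonneg (by positivity), le_div_iff₀ (by positivity)]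
    exact sq_rpow_mul_mul_one_add_rpow_le hα hx0 hxA hS hg0 hg_exp
  · refine norm_cfc_le zero_le_one fun x hx ↦ ?_
    obtain ⟨hx0, -, hg0, hg_exp⟩ := hg x hx
    rw [norm_of_nonneg hg0]
    exact hg_exp.trans (exp_le_one_iff.2 (neg_nonpos.2 (mul_nonneg hS hx0)))

/-- For a nonzero compact positive (self-adjoint) operator `A` on a Hilbert
space, `α > 0`, integers `a ≤ b`, and step-sizes `η_j ∈ (0, 1/‖A‖]`:
`‖A^α ∘ ∏_{j=a}^b (I - η_j A)‖² ≤ ((α/e)^{2α} + ‖A‖^{2α})/(1 + (Σ η_j)^{2α})`,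
where `A^α = cfc (· ^ α) A` is given by the continuous functional calculus;
moreover `‖∏_{j=a}^b (I - η_j A)‖ ≤ 1`. -/
theorem stmt8 {H : Type*} [NormedAddCommGroup H] [InnerProductSpace ℂ H]
    [CompleteSpace H] (A : H →L[ℂ] H) (hA : A ≠ 0)
    (hcpt : IsCompactOperator (A : H →L[ℂ] H)) (hpos : A.IsPositive)
    (α : ℝ) (hα : 0 < α) (a b : ℤ) (hab : a ≤ b) (η : ℤ → ℝ)
    (hη : ∀ j ∈ Finset.Icc a b, η j ∈ Set.Ioc (0 : ℝ) (1 / ‖A‖)) :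
    ‖cfc (fun u : ℝ => u ^ α) A *
          (((Finset.Icc a b).sort (· ≤ ·)).map
              (fun j => (1 : H →L[ℂ] H) - η j • A)).prod‖ ^ 2
        ≤ ((α / Real.exp 1) ^ (2 * α) + ‖A‖ ^ (2 * α)) /
            (1 + (∑ j ∈ Finset.Icc a b, η j) ^ (2 * α)) ∧
      ‖(((Finset.Icc a b).sort (· ≤ ·)).map
            (fun j => (1 : H →L[ℂ] H) - η j • A)).prod‖ ≤ 1 :=
  stmt8_general A hpos α hα a b η hη
end

section
/- Let (Ω, 𝔉, ℙ) be a probability space, let H be a separable real Hilbert space, and let X : Ω → H be a strongly measurable random element with ‖X‖ ≤ 1 almost surely. Suppose there is a constant c ≥ 0 such that for every f ∈ H, E[⟨X, f⟩⁴] ≤ c·(E[⟨X, f⟩²])². Then for every compact bounded linear operator W : H → H, E[‖W X‖⁴] ≤ c·(E[‖W X‖²])². -/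
/-!
In a Hilbert basis `(b i)`, which is countable since `H` is separable, Parseval gives
`‖W x‖² = ∑ᵢ ⟪x, W† bᵢ⟫²`, so `‖W X‖²` is a countable sum of nonnegative variables
`Aᵢ = ⟪X, W† bᵢ⟫²`, each satisfying `E[Aᵢ²] ≤ c (E Aᵢ)²` by hypothesis. Cauchy–Schwarz gives
`E[Aᵢ Aⱼ] ≤ √(E Aᵢ²) √(E Aⱼ²) ≤ c E Aᵢ E Aⱼ`, and summing over `i, j` yields
`E[(∑ Aᵢ)²] ≤ c (E ∑ Aᵢ)²`. In `ℝ≥0∞` sums and integrals commute without summability side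
conditions, so the argument is run there; since `‖X‖ ≤ 1` all variables involved are bounded,
and the translation back to Bochner integrals is exact.
-/

open MeasureTheory
open scoped ENNReal

theorem Orthonormal.countable {𝕜 E ι : Type*} [RCLike 𝕜] [NormedAddCommGroup E]
    [InnerProductSpace 𝕜 E] [TopologicalSpace.SeparableSpace E] {v : ι → E}
    (hv : Orthonormal 𝕜 v) : Countable ι := by
  refine Pairwise.countable_of_isOpen_disjoint (s := fun i => Metric.ball (v i) (1 / 2))
    (fun i j hij => Metric.ball_disjoint_ball ?_) (fun _ => Metric.isOpen_ball)
    (fun _ => Metric.nonempty_ball.2 (by norm_num))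
  have hsq : ‖v i - v j‖ ^ 2 = 2 := by
    rw [@norm_sub_sq 𝕜, hv.1 i, hv.1 j, hv.2 hij]
    norm_num
  rw [dist_eq_norm]
  nlinarith [norm_nonneg (v i - v j)]

theorem HilbertBasis.hasSum_sq_inner_adjoint {ι E F : Type*} [NormedAddCommGroup E]
    [InnerProductSpace ℝ E] [CompleteSpace E] [NormedAddCommGroup F] [InnerProductSpace ℝ F]
    [CompleteSpace F] (b : HilbertBasis ι ℝ F) (T : E →L[ℝ] F) (x : E) :
    HasSum (fun i => inner ℝ x (T.adjoint (b i)) ^ 2) (‖T x‖ ^ 2) := by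
  have h := b.hasSum_inner_mul_inner (T x) (T x)
  rw [real_inner_self_eq_norm_sq] at h
  simpa only [T.adjoint_inner_right, real_inner_comm (T x), sq] using h

theorem ENNReal.lintegral_mul_sq_le {Ω : Type*} [MeasurableSpace Ω] {μ : Measure Ω}
    {f g : Ω → ℝ≥0∞} (hf : AEMeasurable f μ) (hg : AEMeasurable g μ) :
    (∫⁻ ω, f ω * g ω ∂μ) ^ 2 ≤ (∫⁻ ω, f ω ^ 2 ∂μ) * ∫⁻ ω, g ω ^ 2 ∂μ := by
  have h := ENNReal.lintegral_mul_le_Lp_mul_Lq μ Real.HolderConjugate.two_two hf hg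
  simp only [ENNReal.rpow_two, Pi.mul_apply] at h
  calc (∫⁻ ω, f ω * g ω ∂μ) ^ 2
      ≤ ((∫⁻ ω, f ω ^ 2 ∂μ) ^ (1 / 2 : ℝ) * (∫⁻ ω, g ω ^ 2 ∂μ) ^ (1 / 2 : ℝ)) ^ 2 := by gcongr
    _ = (∫⁻ ω, f ω ^ 2 ∂μ) * ∫⁻ ω, g ω ^ 2 ∂μ := by
      rw [mul_pow, ← ENNReal.rpow_two, ← ENNReal.rpow_two, ← ENNReal.rpow_mul, ← ENNReal.rpow_mul]
      norm_num

section SecondMoment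

variable {Ω : Type*} [MeasurableSpace Ω] {μ : Measure Ω} {C : ℝ≥0∞}

theorem lintegral_mul_le_of_lintegral_sq_le {f g : Ω → ℝ≥0∞} (hf : AEMeasurable f μ)
    (hg : AEMeasurable g μ) (hf2 : ∫⁻ ω, f ω ^ 2 ∂μ ≤ C * (∫⁻ ω, f ω ∂μ) ^ 2)
    (hg2 : ∫⁻ ω, g ω ^ 2 ∂μ ≤ C * (∫⁻ ω, g ω ∂μ) ^ 2) :
    ∫⁻ ω, f ω * g ω ∂μ ≤ C * ((∫⁻ ω, f ω ∂μ) * ∫⁻ ω, g ω ∂μ) := by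
  refine (ENNReal.pow_le_pow_left_iff two_ne_zero).1 ?_
  calc (∫⁻ ω, f ω * g ω ∂μ) ^ 2
      ≤ (∫⁻ ω, f ω ^ 2 ∂μ) * ∫⁻ ω, g ω ^ 2 ∂μ := ENNReal.lintegral_mul_sq_le hf hg
    _ ≤ C * (∫⁻ ω, f ω ∂μ) ^ 2 * (C * (∫⁻ ω, g ω ∂μ) ^ 2) := by gcongr
    _ = (C * ((∫⁻ ω, f ω ∂μ) * ∫⁻ ω, g ω ∂μ)) ^ 2 := by ring

theorem lintegral_tsum_sq_le {ι : Type*} [Countable ι] {f : ι → Ω → ℝ≥0∞}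
    (hf : ∀ i, AEMeasurable (f i) μ) (hf2 : ∀ i, ∫⁻ ω, f i ω ^ 2 ∂μ ≤ C * (∫⁻ ω, f i ω ∂μ) ^ 2) :
    ∫⁻ ω, (∑' i, f i ω) ^ 2 ∂μ ≤ C * (∫⁻ ω, ∑' i, f i ω ∂μ) ^ 2 := by
  have hsq : ∀ ω, (∑' i, f i ω) ^ 2 = ∑' i, ∑' j, f i ω * f j ω := fun ω => by
    simp_rw [sq, ← ENNReal.tsum_mul_right, ← ENNReal.tsum_mul_left]
  have hmul : ∀ i j, AEMeasurable (fun ω => f i ω * f j ω) μ := fun i j => (hf i).mul (hf j)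
  calc ∫⁻ ω, (∑' i, f i ω) ^ 2 ∂μ
      = ∑' i, ∑' j, ∫⁻ ω, f i ω * f j ω ∂μ := by
        simp_rw [hsq]
        rw [lintegral_tsum fun i => AEMeasurable.tsum (hmul i)]
        exact tsum_congr fun i => lintegral_tsum (hmul i)
    _ ≤ ∑' i, ∑' j, C * ((∫⁻ ω, f i ω ∂μ) * ∫⁻ ω, f j ω ∂μ) := by
        gcongr with i j
        exact lintegral_mul_le_of_lintegral_sq_le (hf i) (hf j) (hf2 i) (hf2 j)
    _ = C * (∫⁻ ω, ∑' i, f i ω ∂μ) ^ 2 := by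
        rw [lintegral_tsum hf, sq, ← ENNReal.tsum_mul_right, ← ENNReal.tsum_mul_left]
        simp_rw [← ENNReal.tsum_mul_left]

end SecondMoment

theorem real_inner_sq_le_of_norm_le_one {H : Type*} [NormedAddCommGroup H]
    [InnerProductSpace ℝ H] {x : H} (hx : ‖x‖ ≤ 1) (f : H) : inner ℝ x f ^ 2 ≤ ‖f‖ ^ 2 :=
  calc inner ℝ x f ^ 2 = |inner ℝ x f| ^ 2 := (sq_abs _).symm
    _ ≤ (‖x‖ * ‖f‖) ^ 2 := by gcongr; exact abs_real_inner_le_norm _ _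
    _ ≤ ‖f‖ ^ 2 := by gcongr; exact mul_le_of_le_one_left (norm_nonneg _) hx

theorem integral_sq_le_iff_lintegral {Ω : Type*} [MeasurableSpace Ω] {μ : Measure Ω}
    [IsFiniteMeasure μ] {G : Ω → ℝ} (hG : AEStronglyMeasurable G μ) (hG0 : 0 ≤ᵐ[μ] G)
    {K : ℝ} (hGK : ∀ᵐ ω ∂μ, G ω ≤ K) {c : ℝ} (hc : 0 ≤ c) :
    ∫ ω, G ω ^ 2 ∂μ ≤ c * (∫ ω, G ω ∂μ) ^ 2 ↔ ∫⁻ ω, ENNReal.ofReal (G ω) ^ 2 ∂μ ≤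
      ENNReal.ofReal c * (∫⁻ ω, ENNReal.ofReal (G ω) ∂μ) ^ 2 := by
  have hGbd : ∀ᵐ ω ∂μ, ‖G ω‖ ≤ K := by
    filter_upwards [hG0, hGK] with ω h0 hK
    rwa [Real.norm_of_nonneg h0]
  have hG1 : Integrable G μ := .of_bound hG K hGbd
  have hG2 : Integrable (fun ω => G ω ^ 2) μ := .of_bound (hG.pow 2) (K ^ 2) <| by
    filter_upwards [hGbd] with ω h
    rw [norm_pow]
    exact pow_le_pow_left₀ (norm_nonneg _) h 2
  have hsq : ∫⁻ ω, ENNReal.ofReal (G ω) ^ 2 ∂μ = ENNReal.ofReal (∫ ω, G ω ^ 2 ∂μ) := by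
    rw [ofReal_integral_eq_lintegral_ofReal hG2 (.of_forall fun ω => sq_nonneg _)]
    refine lintegral_congr_ae ?_
    filter_upwards [hG0] with ω h0
    exact (ENNReal.ofReal_pow h0 2).symm
  rw [hsq, ← ofReal_integral_eq_lintegral_ofReal hG1 hG0,
    ← ENNReal.ofReal_pow (integral_nonneg_of_ae hG0), ← ENNReal.ofReal_mul hc,
    ENNReal.ofReal_le_ofReal_iff (by positivity)]

/-- Let `X` be a strongly measurable random element of a separable real
Hilbert space `H` with `‖X‖ ≤ 1` a.s. If `E[⟨X,f⟩⁴] ≤ c·(E[⟨X,f⟩²])²`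
for every `f ∈ H`, then `E[‖WX‖⁴] ≤ c·(E[‖WX‖²])²` for every compact
bounded linear operator `W : H → H`. -/
theorem stmt18 {Ω : Type*} [MeasurableSpace Ω] (μ : Measure Ω)
    [IsProbabilityMeasure μ]
    {H : Type*} [NormedAddCommGroup H] [InnerProductSpace ℝ H]
    [CompleteSpace H] [TopologicalSpace.SeparableSpace H]
    (X : Ω → H) (hX : StronglyMeasurable X)
    (hbd : ∀ᵐ ω ∂μ, ‖X ω‖ ≤ 1)
    (c : ℝ) (hc : 0 ≤ c)
    (hmom : ∀ f : H,
      (∫ ω, (inner ℝ (X ω) f : ℝ) ^ 4 ∂μ)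
        ≤ c * (∫ ω, (inner ℝ (X ω) f : ℝ) ^ 2 ∂μ) ^ 2) :
    ∀ W : H →L[ℝ] H, IsCompactOperator W →
      (∫ ω, ‖W (X ω)‖ ^ 4 ∂μ) ≤ c * (∫ ω, ‖W (X ω)‖ ^ 2 ∂μ) ^ 2 := by
  intro W _
  obtain ⟨w, b, -⟩ := exists_hilbertBasis ℝ H
  have := b.orthonormal.countable
  have hXf_meas : ∀ f : H, AEStronglyMeasurable (fun ω => inner ℝ (X ω) f ^ 2) μ := fun f =>
    ((hX.inner stronglyMeasurable_const).pow 2).aestronglyMeasurable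
  have hproj : ∀ f : H, ∫⁻ ω, ENNReal.ofReal (inner ℝ (X ω) f ^ 2) ^ 2 ∂μ ≤
      ENNReal.ofReal c * (∫⁻ ω, ENNReal.ofReal (inner ℝ (X ω) f ^ 2) ∂μ) ^ 2 := fun f =>
    (integral_sq_le_iff_lintegral (hXf_meas f) (.of_forall fun _ => sq_nonneg _)
      (hbd.mono fun _ hω => real_inner_sq_le_of_norm_le_one hω f) hc).1
      (by simpa only [← pow_mul] using hmom f)
  have hparseval : ∀ ω, ∑' i, ENNReal.ofReal (inner ℝ (X ω) (W.adjoint (b i)) ^ 2) =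
      ENNReal.ofReal (‖W (X ω)‖ ^ 2) := fun ω => by
    have h := b.hasSum_sq_inner_adjoint W (X ω)
    rw [← ENNReal.ofReal_tsum_of_nonneg (fun _ => sq_nonneg _) h.summable, h.tsum_eq]
  have hWX_le : ∀ᵐ ω ∂μ, ‖W (X ω)‖ ^ 2 ≤ ‖W‖ ^ 2 := hbd.mono fun ω hω => by
    gcongr
    exact W.le_of_opNorm_le_of_le le_rfl hω |>.trans_eq (mul_one _)
  simp only [show ∀ t : ℝ, t ^ 4 = (t ^ 2) ^ 2 by intro t; ring]
  refine (integral_sq_le_iff_lintegral (G := fun ω => ‖W (X ω)‖ ^ 2)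
    ((W.continuous.norm.pow 2).comp_aestronglyMeasurable hX.aestronglyMeasurable)
    (.of_forall fun _ => sq_nonneg _) hWX_le hc).2 ?_
  simp_rw [← hparseval]
  exact lintegral_tsum_sq_le (fun _ => (hXf_meas _).aemeasurable.ennreal_ofReal) fun _ => hproj _
end
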